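/- Let M be a compact metric space and w_j^{(n)} nonnegative weights summing to 1. Suppose for every bounded measurable f : M → ℝ, ∑_j w_j^{(n)} f(Y_j) → E[f(Y) | X] in probability. Then the weighted empirical measure Pₙ := ∑_j w_j^{(n)} δ_{Y_j} converges in probability, in bounded-Lipschitz distance, to the conditional law of Y given X. -/

import Mathlib

open MeasureTheory Filter Topology NNReal

/-!
For continuous `f`, the discrepancy `∑ⱼ wⱼ f(Yⱼ) - ∫ f dν` is 2-Lipschitz in `f` for the sup
distance, because the weights and `ν` are both probability distributions. By Arzelà–Ascoli the
bounded-Lipschitz unit ball of `C(M, ℝ)` is compact, so it has a finite net of mesh below `ε/4`; a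
discrepancy above `ε` somewhere on the ball forces one above `ε/2` at a net point, and a finite
union bound turns pointwise convergence in probability into uniform convergence over the ball.
-/

def boundedLipschitzBall (M : Type*) [MetricSpace M] : Set C(M, ℝ) :=
  {f | LipschitzWith 1 f ∧ ∀ y, |f y| ≤ 1}

theorem isCompact_boundedLipschitzBall (M : Type*) [MetricSpace M] [CompactSpace M] :
    IsCompact (boundedLipschitzBall M) := by
  have himage : ContinuousMap.toFun '' boundedLipschitzBall M =
      {f : M → ℝ | LipschitzWith 1 f} ∩ Set.univ.pi fun _ => Set.Icc (-1) 1 := by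
    ext f
    simp only [boundedLipschitzBall, Set.mem_image, Set.mem_inter_iff, Set.mem_ofPred_eq,
      Set.mem_univ_pi, Set.mem_Icc, ← abs_le]
    refine ⟨?_, fun ⟨hf, hf1⟩ => ⟨⟨f, hf.continuous⟩, ⟨hf, hf1⟩, rfl⟩⟩
    rintro ⟨f, ⟨hf, hf1⟩, rfl⟩
    exact ⟨hf, hf1⟩
  refine ArzelaAscoli.isCompact_of_equicontinuous _ ?_ ?_
  · rw [himage]
    exact (isCompact_univ_pi fun _ => isCompact_Icc).inter_left
      (isClosed_setOfPred_lipschitzWith 1)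
  · exact (LipschitzWith.uniformEquicontinuous _ 1 fun f => f.2.1).equicontinuous

theorem abs_sum_mul_sub_sum_mul_le {ι : Type*} [Fintype ι] {w a b : ι → ℝ} {η : ℝ}
    (hw0 : ∀ i, 0 ≤ w i) (hw1 : ∑ i, w i = 1) (hab : ∀ i, |a i - b i| ≤ η) :
    |∑ i, w i * a i - ∑ i, w i * b i| ≤ η :=
  calc |∑ i, w i * a i - ∑ i, w i * b i| = |∑ i, w i * (a i - b i)| := by
        simp only [mul_sub, Finset.sum_sub_distrib]
    _ ≤ ∑ i, |w i * (a i - b i)| := Finset.abs_sum_le_sum_abs _ _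
    _ ≤ ∑ i, w i * η := Finset.sum_le_sum fun i _ => by
        rw [abs_mul, abs_of_nonneg (hw0 i)]
        exact mul_le_mul_of_nonneg_left (hab i) (hw0 i)
    _ = η := by rw [← Finset.sum_mul, hw1, one_mul]

theorem abs_integral_sub_integral_le {α : Type*} [MeasurableSpace α] {μ : Measure α}
    [IsProbabilityMeasure μ] {f g : α → ℝ} {η : ℝ} (hf : Integrable f μ) (hg : Integrable g μ)
    (hfg : ∀ x, |f x - g x| ≤ η) :
    |∫ x, f x ∂μ - ∫ x, g x ∂μ| ≤ η := by
  rw [← integral_sub hf hg]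
  simpa using norm_integral_le_of_norm_le_const (μ := μ) (f := fun x => f x - g x) (Eventually.of_forall hfg)

theorem lipschitzWith_sum_mul_apply_sub_integral {ι M : Type*} [Fintype ι] [TopologicalSpace M]
    [CompactSpace M] [MeasurableSpace M] [OpensMeasurableSpace M] (μ : Measure M)
    [IsProbabilityMeasure μ] {w : ι → ℝ} (hw0 : ∀ i, 0 ≤ w i) (hw1 : ∑ i, w i = 1) (y : ι → M) :
    LipschitzWith 2 fun f : C(M, ℝ) => ∑ i, w i * f (y i) - ∫ x, f x ∂μ := by
  have hint (f : C(M, ℝ)) : Integrable f μ :=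
    f.continuous.integrable_of_hasCompactSupport (.of_compactSpace f)
  refine LipschitzWith.of_dist_le_mul fun f g => ?_
  have hfg (x : M) : |f x - g x| ≤ dist f g := by
    simpa only [Real.dist_eq] using ContinuousMap.dist_apply_le_dist (f := f) (g := g) x
  rw [Real.dist_eq, sub_sub_sub_comm, NNReal.coe_ofNat, two_mul]
  exact (abs_sub _ _).trans (add_le_add (abs_sum_mul_sub_sum_mul_le hw0 hw1 fun i => hfg (y i))
    (abs_integral_sub_integral_le (hint f) (hint g) hfg))

theorem tendsto_measure_exists_lt_abs_of_totallyBounded {Ω F ι : Type*} [MeasurableSpace Ω]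
    [PseudoMetricSpace F] {μ : Measure Ω} {l : Filter ι} {K : Set F} (hK : TotallyBounded K)
    {D : ι → Ω → F → ℝ} {L : ℝ≥0} (hD : ∀ n ω, LipschitzOnWith L (D n ω) K)
    (hpt : ∀ f ∈ K, ∀ δ > 0, Tendsto (fun n => μ {ω | δ < |D n ω f|}) l (𝓝 0))
    {ε : ℝ} (hε : 0 < ε) :
    Tendsto (fun n => μ {ω | ∃ f ∈ K, ε < |D n ω f|}) l (𝓝 0) := by
  obtain ⟨r, hr, hLr⟩ := exists_pos_mul_lt (half_pos hε) L
  obtain ⟨t, htK, ht, hKt⟩ := Metric.finite_approx_of_totallyBounded hK r hr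
  have hsub (n : ι) : {ω | ∃ f ∈ K, ε < |D n ω f|} ⊆ ⋃ s ∈ ht.toFinset, {ω | ε / 2 < |D n ω s|} := by
    rintro ω ⟨f, hf, hfε⟩
    obtain ⟨s, hs, hfs⟩ := Set.mem_iUnion₂.1 (hKt hf)
    have hDfs : |D n ω f - D n ω s| ≤ L * r := by
      rw [← Real.dist_eq]
      exact ((hD n ω).dist_le_mul f hf s (htK hs)).trans
        (mul_le_mul_of_nonneg_left (Metric.mem_ball.1 hfs).le L.2)
    refine Set.mem_iUnion₂.2 ⟨s, ht.mem_toFinset.2 hs, ?_⟩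
    have := abs_sub_abs_le_abs_sub (D n ω f) (D n ω s)
    show ε / 2 < |D n ω s|
    linarith
  have hsum := tendsto_finsetSum ht.toFinset fun s hs =>
    hpt s (htK (ht.mem_toFinset.1 hs)) (ε / 2) (half_pos hε)
  rw [Finset.sum_const_zero] at hsum
  exact tendsto_of_tendsto_of_tendsto_of_le_of_le tendsto_const_nhds hsum (fun _ => zero_le)
    fun n => (measure_mono (hsub n)).trans (measure_biUnion_finset_le _ _)

theorem stmt19_general {Ω M : Type*} [MeasureSpace Ω]
    [MetricSpace M] [CompactSpace M] [MeasurableSpace M] [BorelSpace M]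
    (Y : ℕ → Ω → M) (w : (n : ℕ) → Fin n → Ω → ℝ)
    (hw0 : ∀ n (j : Fin n) ω, 0 ≤ w n j ω) (hw1 : ∀ n ω, ∑ j, w n j ω = 1)
    (ν : Ω → Measure M) (hν : ∀ ω, IsProbabilityMeasure (ν ω))
    (hcons : ∀ f : M → ℝ, Measurable f → (∃ C, ∀ y, |f y| ≤ C) →
      ∀ δ : ℝ, 0 < δ →
        Tendsto (fun n =>
            volume {ω : Ω | δ < |(∑ j : Fin n, w n j ω * f (Y j ω)) - ∫ y, f y ∂(ν ω)|})
          atTop (nhds 0)) :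
    ∀ ε : ℝ, 0 < ε →
      Tendsto (fun n =>
          volume {ω : Ω | ∃ g : M → ℝ, (∀ y, |g y| ≤ 1) ∧
            (∀ y₁ y₂, |g y₁ - g y₂| ≤ dist y₁ y₂) ∧
            ε < |(∑ j : Fin n, w n j ω * g (Y j ω)) - ∫ y, g y ∂(ν ω)|})
        atTop (nhds 0) := by
  intro ε hε
  have hsup := tendsto_measure_exists_lt_abs_of_totallyBounded
    (isCompact_boundedLipschitzBall M).totallyBounded
    (fun n ω => (lipschitzWith_sum_mul_apply_sub_integral (ν ω) (hw0 n · ω) (hw1 n ω)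
      (Y · ω)).lipschitzOnWith)
    (fun f hf δ hδ => hcons f f.continuous.measurable ⟨1, hf.2⟩ δ hδ) hε
  refine tendsto_of_tendsto_of_tendsto_of_le_of_le tendsto_const_nhds hsup (fun _ => zero_le)
    fun n => measure_mono ?_
  rintro ω ⟨g, hg1, hg2, hgε⟩
  have hg : LipschitzWith 1 g :=
    LipschitzWith.of_dist_le_mul fun x y => by simpa [Real.dist_eq] using hg2 x y
  exact ⟨⟨g, hg.continuous⟩, ⟨hg, hg1⟩, hgε⟩

theorem stmt19 {Ω M : Type*} [MeasureSpace Ω]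
    [IsProbabilityMeasure (volume : Measure Ω)]
    [MetricSpace M] [CompactSpace M] [MeasurableSpace M] [BorelSpace M]
    (Y : ℕ → Ω → M) (w : (n : ℕ) → Fin n → Ω → ℝ)
    (hw0 : ∀ n (j : Fin n) ω, 0 ≤ w n j ω) (hw1 : ∀ n ω, ∑ j, w n j ω = 1)
    (ν : Ω → Measure M) (hν : ∀ ω, IsProbabilityMeasure (ν ω))
    (hcons : ∀ f : M → ℝ, Measurable f → (∃ C, ∀ y, |f y| ≤ C) →
      ∀ δ : ℝ, 0 < δ →
        Tendsto (fun n =>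
            volume {ω : Ω | δ < |(∑ j : Fin n, w n j ω * f (Y j ω)) - ∫ y, f y ∂(ν ω)|})
          atTop (nhds 0)) :
    ∀ ε : ℝ, 0 < ε →
      Tendsto (fun n =>
          volume {ω : Ω | ∃ g : M → ℝ, (∀ y, |g y| ≤ 1) ∧
            (∀ y₁ y₂, |g y₁ - g y₂| ≤ dist y₁ y₂) ∧
            ε < |(∑ j : Fin n, w n j ω * g (Y j ω)) - ∫ y, g y ∂(ν ω)|})
        atTop (nhds 0) :=
  stmt19_general Y w hw0 hw1 ν hν hcons
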